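/- The multidimensional HLLC flux satisfies the contact property: for any two states U_L = (ρ_L, 0, p/(γ-1)) and U_R = (ρ_R, 0, p/(γ-1)) sharing zero velocity and the same pressure p > 0, and any unit vector n, F^hllc(U_L, U_R; n) = (0, p nᵀ, 0)ᵀ. -/

import Mathlib

open Real

/-- A conservative state (or flux value) for the d-dimensional Euler equations:
(density, momentum, energy). -/
abbrev EulerU (d : ℕ) : Type := ℝ × (Fin d → ℝ) × ℝ

/-- Velocity of a state. -/
noncomputable def vel {d : ℕ} (U : EulerU d) : Fin d → ℝ := fun i => U.2.1 i / U.1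

/-- Pressure of a state (ideal gas law p = (γ-1)ρe). -/
noncomputable def pres {d : ℕ} (γ : ℝ) (U : EulerU d) : ℝ :=
  (γ - 1) * (U.2.2 - U.1 * (∑ i, vel U i ^ 2) / 2)

/-- Normal velocity û = u·n. -/
noncomputable def uhat {d : ℕ} (U : EulerU d) (n : Fin d → ℝ) : ℝ := ∑ i, vel U i * n i

/-- Physical Euler flux in direction n. -/
noncomputable def eulerFlux {d : ℕ} (γ : ℝ) (U : EulerU d) (n : Fin d → ℝ) : EulerU d :=
  (U.1 * uhat U n,
   fun i => U.1 * uhat U n * vel U i + pres γ U * n i,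
   (U.2.2 + pres γ U) * uhat U n)

/-- Sound speed c = √(γp/ρ). -/
noncomputable def sound {d : ℕ} (γ : ℝ) (U : EulerU d) : ℝ :=
  Real.sqrt (γ * pres γ U / U.1)

/-- Left wave speed estimate. -/
noncomputable def SL {d : ℕ} (γ : ℝ) (UL UR : EulerU d) (n : Fin d → ℝ) : ℝ :=
  min (uhat UL n - sound γ UL) (uhat UR n - sound γ UR)

/-- Right wave speed estimate. -/
noncomputable def SR {d : ℕ} (γ : ℝ) (UL UR : EulerU d) (n : Fin d → ℝ) : ℝ :=
  max (uhat UL n + sound γ UL) (uhat UR n + sound γ UR)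

/-- Middle (contact) wave speed estimate. -/
noncomputable def Sstar {d : ℕ} (γ : ℝ) (UL UR : EulerU d) (n : Fin d → ℝ) : ℝ :=
  (pres γ UR - pres γ UL + UL.1 * uhat UL n * (SL γ UL UR n - uhat UL n)
      - UR.1 * uhat UR n * (SR γ UL UR n - uhat UR n))
    / (UL.1 * (SL γ UL UR n - uhat UL n) - UR.1 * (SR γ UL UR n - uhat UR n))

/-- Intermediate star state. -/
noncomputable def Ustar {d : ℕ} (γ : ℝ) (U : EulerU d) (S Ss : ℝ) (n : Fin d → ℝ) :
    EulerU d :=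
  (U.1 * ((S - uhat U n) / (S - Ss)),
   fun i => U.1 * ((S - uhat U n) / (S - Ss)) * vel U i,
   U.1 * ((S - uhat U n) / (S - Ss)) *
     (U.2.2 / U.1 + (Ss - uhat U n) * (Ss + pres γ U / (U.1 * (S - uhat U n)))))

/-- Intermediate star flux F_{*i} = F_i + S_i (U_{*i} - U_i). -/
noncomputable def Fstar {d : ℕ} (γ : ℝ) (U : EulerU d) (S Ss : ℝ) (n : Fin d → ℝ) :
    EulerU d :=
  eulerFlux γ U n + S • (Ustar γ U S Ss n - U)

/-- The multidimensional HLLC numerical flux. -/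
noncomputable def hllc {d : ℕ} (γ : ℝ) (UL UR : EulerU d) (n : Fin d → ℝ) : EulerU d :=
  if 0 ≤ SL γ UL UR n then eulerFlux γ UL n
  else if 0 ≤ Sstar γ UL UR n then Fstar γ UL (SL γ UL UR n) (Sstar γ UL UR n) n
  else if 0 ≤ SR γ UL UR n then Fstar γ UR (SR γ UL UR n) (Sstar γ UL UR n) n
  else eulerFlux γ UR n

section RestStates

variable {d : ℕ} {γ : ℝ}

@[simp]
theorem vel_rest (ρ E : ℝ) : vel ((ρ, 0, E) : EulerU d) = 0 := by
  funext i
  simp [vel]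

@[simp]
theorem uhat_rest (ρ E : ℝ) (n : Fin d → ℝ) : uhat ((ρ, 0, E) : EulerU d) n = 0 := by
  simp [uhat]

@[simp]
theorem pres_rest (ρ E : ℝ) : pres γ ((ρ, 0, E) : EulerU d) = (γ - 1) * E := by
  simp [pres]

theorem eulerFlux_rest (ρ E : ℝ) (n : Fin d → ℝ) :
    eulerFlux γ ((ρ, 0, E) : EulerU d) n = (0, fun i => (γ - 1) * E * n i, 0) := by
  simp [eulerFlux]

theorem Sstar_rest (ρL ρR E : ℝ) (n : Fin d → ℝ) :
    Sstar γ ((ρL, 0, E) : EulerU d) (ρR, 0, E) n = 0 := by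
  simp [Sstar]

theorem Ustar_rest {ρ E S : ℝ} (hρ : ρ ≠ 0) (hS : S ≠ 0) (n : Fin d → ℝ) :
    Ustar γ ((ρ, 0, E) : EulerU d) S 0 n = (ρ, 0, E) := by
  ext
  · simp [Ustar, hS]
  · simp [Ustar]
  · simp [Ustar, hS, mul_div_cancel₀ _ hρ]

theorem Fstar_rest {ρ E S : ℝ} (hρ : ρ ≠ 0) (hS : S ≠ 0) (n : Fin d → ℝ) :
    Fstar γ ((ρ, 0, E) : EulerU d) S 0 n = eulerFlux γ (ρ, 0, E) n := by
  simp [Fstar, Ustar_rest hρ hS]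

/-- Equal pressures and zero normal velocities make `S*` vanish, so the flux is taken on the left
of the contact, where `U_{*L} = U_L` and hence `F_{*L} = F_L`. -/
theorem hllc_rest {ρL ρR E : ℝ} (hρL : ρL ≠ 0) (n : Fin d → ℝ) :
    hllc γ ((ρL, 0, E) : EulerU d) (ρR, 0, E) n = eulerFlux γ (ρL, 0, E) n := by
  have hSstar := Sstar_rest (γ := γ) ρL ρR E n
  unfold hllc
  split_ifs with hSL hSstar_nonneg
  · rfl
  · rw [hSstar, Fstar_rest hρL (not_le.mp hSL).ne]
  all_goals exact absurd hSstar.ge hSstar_nonneg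

end RestStates

theorem hllc_contact_property_general
    (d : ℕ) (γ : ℝ) (hγ : 1 < γ) (ρL ρR p : ℝ)
    (hρL : 0 < ρL)
    (n : Fin d → ℝ) :
    hllc γ (ρL, 0, p / (γ - 1)) (ρR, 0, p / (γ - 1)) n
      = (0, fun i => p * n i, 0) := by
  rw [hllc_rest hρL.ne', eulerFlux_rest, mul_div_cancel₀ p (sub_ne_zero.mpr hγ.ne')]

/-- Contact property of the HLLC flux: for two states with zero velocity and the same
pressure p, F^hllc(U_L, U_R; n) = (0, p nᵀ, 0)ᵀ. -/
theorem hllc_contact_property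
    (d : ℕ) (γ : ℝ) (hγ : 1 < γ) (ρL ρR p : ℝ)
    (hρL : 0 < ρL) (hρR : 0 < ρR) (hp : 0 < p)
    (n : Fin d → ℝ) (hn : ∑ i, n i ^ 2 = 1) :
    hllc γ (ρL, 0, p / (γ - 1)) (ρR, 0, p / (γ - 1)) n
      = (0, fun i => p * n i, 0) :=
  hllc_contact_property_general d γ hγ ρL ρR p hρL n
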